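/- Let J be a random variable on positive integers with P(J = j) = q_j = 4^{−j}(4·Cat(j−1) − Cat(j)). Then (q_j)_{j≥1} is a probability mass function and E[J] = 2. -/

import Mathlib

/-!
With `a n = Cat(n) / 4^n` (`scaledCatalan`) and `c n = binom(2n, n) / 4^n` (`scaledCentralBinom`)
the weights telescope, `q (n + 1) = a n - a (n + 1)`, so `Σ_{j<N} q (j + 1) = 1 - a N` and, by
summation by parts, `Σ_{j<N} (j + 1) q (j + 1) = Σ_{j<N} a j - N a N = 2 - 2 c N - N a N`.
The ratio `c (n + 1) / c n = (2n + 1) / (2n + 2)` gives `c n ^ 2 ≤ 1 / (2n + 1)`, and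
`a n = c n / (n + 1)`, so all error terms vanish.
-/

/-- `q j = 4^{−j}(4·Cat(j−1) − Cat(j))`, for `j ≥ 1` the probability that a left step of the
Schnyder peeling process covers `j` boundary vertices to the left. -/
noncomputable def qDist (j : ℕ) : ℝ :=
  (4 : ℝ) ^ (-(j : ℤ)) * (4 * catalan (j - 1) - catalan j)

open Filter Topology Finset

theorem sum_range_succ_mul_sub_succ (f : ℕ → ℝ) (N : ℕ) :
    ∑ j ∈ range N, ((j : ℝ) + 1) * (f j - f (j + 1)) = ∑ j ∈ range N, f j - N * f N := by
  induction N with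
  | zero => simp
  | succ N ih =>
    rw [sum_range_succ, ih, sum_range_succ]
    push_cast
    ring

noncomputable def scaledCentralBinom (n : ℕ) : ℝ := (n.centralBinom : ℝ) / 4 ^ n

noncomputable def scaledCatalan (n : ℕ) : ℝ := (catalan n : ℝ) / 4 ^ n

theorem scaledCentralBinom_pos (n : ℕ) : 0 < scaledCentralBinom n := by
  have := n.centralBinom_pos
  unfold scaledCentralBinom
  positivity

theorem scaledCentralBinom_succ (n : ℕ) :
    scaledCentralBinom (n + 1) = (2 * n + 1) / (2 * (n + 1)) * scaledCentralBinom n := by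
  have h : ((n : ℝ) + 1) * ((n + 1).centralBinom : ℝ) = 2 * (2 * n + 1) * n.centralBinom := by
    exact_mod_cast n.succ_mul_centralBinom_succ
  unfold scaledCentralBinom
  rw [pow_succ]
  field_simp
  linear_combination 2 * h

theorem scaledCentralBinom_sq_le (n : ℕ) : scaledCentralBinom n ^ 2 ≤ 1 / (2 * n + 1) := by
  induction n with
  | zero => simp [scaledCentralBinom]
  | succ n ih =>
    rw [scaledCentralBinom_succ, mul_pow]
    push_cast
    calc ((2 * n + 1 : ℝ) / (2 * (n + 1))) ^ 2 * scaledCentralBinom n ^ 2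
        ≤ ((2 * n + 1 : ℝ) / (2 * (n + 1))) ^ 2 * (1 / (2 * n + 1)) := by gcongr
      _ ≤ (1 : ℝ) / (2 * (n + 1) + 1) := by
        rw [div_pow, div_mul_div_comm, div_le_div_iff₀ (by positivity) (by positivity)]
        nlinarith [sq_nonneg (n : ℝ)]

theorem tendsto_scaledCentralBinom_atTop : Tendsto scaledCentralBinom atTop (𝓝 0) := by
  have hsq : Tendsto (fun n ↦ scaledCentralBinom n ^ 2) atTop (𝓝 0) := by
    refine squeeze_zero (fun n ↦ by positivity) scaledCentralBinom_sq_le ?_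
    refine squeeze_zero (fun n ↦ by positivity) (fun n ↦ ?_) tendsto_one_div_add_atTop_nhds_zero_nat
    gcongr
    linarith [(n.cast_nonneg : (0 : ℝ) ≤ n)]
  simpa [Real.sqrt_sq (scaledCentralBinom_pos _).le] using hsq.sqrt

theorem scaledCatalan_eq (n : ℕ) : scaledCatalan n = scaledCentralBinom n / (n + 1) := by
  have h : ((n : ℝ) + 1) * catalan n = n.centralBinom := by
    exact_mod_cast succ_mul_catalan_eq_centralBinom n
  unfold scaledCatalan scaledCentralBinom
  field_simp
  linear_combination h

theorem scaledCatalan_nonneg (n : ℕ) : 0 ≤ scaledCatalan n := by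
  unfold scaledCatalan
  positivity

theorem scaledCatalan_succ_le (n : ℕ) : scaledCatalan (n + 1) ≤ scaledCatalan n := by
  rw [scaledCatalan_eq, scaledCatalan_eq, scaledCentralBinom_succ, div_mul_eq_mul_div, div_div,
    div_le_div_iff₀ (by positivity) (by positivity)]
  push_cast
  nlinarith [scaledCentralBinom_pos n]

theorem natCast_mul_scaledCatalan_le (n : ℕ) : n * scaledCatalan n ≤ scaledCentralBinom n := by
  rw [scaledCatalan_eq, mul_div_assoc', div_le_iff₀ (by positivity)]
  nlinarith [scaledCentralBinom_pos n]

theorem tendsto_natCast_mul_scaledCatalan_atTop :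
    Tendsto (fun n : ℕ ↦ n * scaledCatalan n) atTop (𝓝 0) :=
  squeeze_zero (fun n ↦ mul_nonneg n.cast_nonneg (scaledCatalan_nonneg n))
    natCast_mul_scaledCatalan_le tendsto_scaledCentralBinom_atTop

theorem tendsto_scaledCatalan_atTop : Tendsto scaledCatalan atTop (𝓝 0) :=
  squeeze_zero scaledCatalan_nonneg
    (fun n ↦ (scaledCatalan_eq n ▸ div_le_self (scaledCentralBinom_pos n).le (by simp)))
    tendsto_scaledCentralBinom_atTop

theorem sum_range_scaledCatalan (N : ℕ) :
    ∑ j ∈ range N, scaledCatalan j = 2 - 2 * scaledCentralBinom N := by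
  induction N with
  | zero => simp [scaledCentralBinom]
  | succ N ih =>
    rw [sum_range_succ, ih, scaledCentralBinom_succ, scaledCatalan_eq]
    field_simp
    ring

theorem qDist_succ (n : ℕ) : qDist (n + 1) = scaledCatalan n - scaledCatalan (n + 1) := by
  unfold qDist scaledCatalan
  rw [Nat.add_sub_cancel, zpow_neg, zpow_natCast]
  field_simp
  ring

theorem qDist_succ_nonneg (n : ℕ) : 0 ≤ qDist (n + 1) := by
  rw [qDist_succ]
  linarith [scaledCatalan_succ_le n]

theorem sum_range_qDist_succ (N : ℕ) : ∑ j ∈ range N, qDist (j + 1) = 1 - scaledCatalan N := by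
  simp only [qDist_succ, sum_range_sub', scaledCatalan, catalan_zero]
  simp

theorem sum_range_succ_mul_qDist_succ (N : ℕ) :
    ∑ j ∈ range N, ((j : ℝ) + 1) * qDist (j + 1)
      = 2 - 2 * scaledCentralBinom N - N * scaledCatalan N := by
  simp only [qDist_succ, sum_range_succ_mul_sub_succ, sum_range_scaledCatalan]

/-- `(q_j)_{j≥1}` is a probability mass function and `E[J] = 2`. -/
theorem stmt_9 :
    (∀ j : ℕ, 1 ≤ j → 0 ≤ qDist j)
    ∧ HasSum (fun j : ℕ => qDist (j + 1)) 1
    ∧ HasSum (fun j : ℕ => ((j : ℝ) + 1) * qDist (j + 1)) 2 := by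
  refine ⟨fun j hj ↦ ?_, ?_, ?_⟩
  · obtain ⟨n, rfl⟩ := Nat.exists_eq_add_of_le' hj
    exact qDist_succ_nonneg n
  · rw [hasSum_iff_tendsto_nat_of_nonneg qDist_succ_nonneg]
    simp only [sum_range_qDist_succ]
    simpa using tendsto_scaledCatalan_atTop.const_sub 1
  · rw [hasSum_iff_tendsto_nat_of_nonneg fun n ↦ mul_nonneg (by positivity) (qDist_succ_nonneg n)]
    simp only [sum_range_succ_mul_qDist_succ]
    simpa using ((tendsto_scaledCentralBinom_atTop.const_mul 2).const_sub 2).sub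
      tendsto_natCast_mul_scaledCatalan_atTop
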